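/- arXiv:2110.04928 — 3 statements merged into one kernel-verified Lean document; each statement's English description precedes it below -/
import Mathlib

section
/- Let p₁, p₂ ∈ ℚ[a, c] be the N = 2 specializations of the explicit relation polynomials (degrees 9 and 10 respectively with deg a = 1, deg c = 2), and let R = ℚ[a, c]/(p₁, p₂). Then the degree 16 graded piece R₁₆ is a 1-dimensional ℚ-vector space, and Rᵢ = 0 for all i > 16. -/
open MvPolynomial

noncomputable section

/-- The variable `a`, of weighted degree 1. -/
def a : MvPolynomial (Fin 2) ℚ := X 0

/-- The variable `c`, of weighted degree 2. -/
def c : MvPolynomial (Fin 2) ℚ := X 1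

/-- The grading weights: `deg a = 1`, `deg c = 2`. -/
def w : Fin 2 → ℕ := ![1, 2]

/-- The first relation polynomial `p₁(N, a, c)`. -/
def p1 (N : ℚ) : MvPolynomial (Fin 2) ℚ :=
  C (1620*N - 1296) * a^9
  + C (-19440*N^3 + 46656*N^2 - 35244*N + 8289) * a^7 * c
  + C (40824*N^5 - 163296*N^4 + 246708*N^3 - 174069*N^2 + 56478*N - 6584) * a^5 * c^2
  + C (-19440*N^7 + 108864*N^6 - 246708*N^5 + 290115*N^4 - 188260*N^3 + 65840*N^2
      - 11038*N + 631) * a^3 * c^3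
  + C (1620*N^9 - 11664*N^8 + 35244*N^7 - 58023*N^6 + 56478*N^5 - 32920*N^4
      + 11038*N^3 - 1893*N^2 + 120*N) * a * c^4

/-- The second relation polynomial `p₂(N, a, c)`. -/
def p2 (N : ℚ) : MvPolynomial (Fin 2) ℚ :=
  C 324 * a^10
  + C (-14580*N^2 + 23328*N - 8811) * a^8 * c
  + C (68040*N^4 - 217728*N^3 + 246708*N^2 - 116046*N + 18826) * a^6 * c^2
  + C (-68040*N^6 + 326592*N^5 - 616770*N^4 + 580230*N^3 - 282390*N^2 + 65840*N
      - 5519) * a^4 * c^3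
  + C (14580*N^8 - 93312*N^7 + 246708*N^6 - 348138*N^5 + 282390*N^4 - 131680*N^3
      + 33114*N^2 - 3786*N + 120) * a^2 * c^4
  + C (-324*N^10 + 2592*N^9 - 8811*N^8 + 16578*N^7 - 18826*N^6 + 13168*N^5
      - 5519*N^4 + 1262*N^3 - 120*N^2) * c^5

/-- The degree `i` graded piece of the quotient of `ℚ[a,c]` (weighted grading) by `I`. -/
def piece (I : Ideal (MvPolynomial (Fin 2) ℚ)) (i : ℕ) :
    Submodule ℚ (MvPolynomial (Fin 2) ℚ ⧸ I) :=
  Submodule.map (Ideal.Quotient.mkₐ ℚ I).toLinearMap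
    (weightedHomogeneousSubmodule ℚ w i)

end

noncomputable section AuxK3

abbrev R' := MvPolynomial (Fin 2) ℚ

/-- Exponent finsupps. -/
def e (i j : ℕ) : Fin 2 →₀ ℕ := Finsupp.single 0 i + Finsupp.single 1 j

lemma e_apply0 (i j : ℕ) : e i j 0 = i := by simp [e, Finsupp.single_apply]
lemma e_apply1 (i j : ℕ) : e i j 1 = j := by simp [e, Finsupp.single_apply]

lemma e_le {i j I J : ℕ} : e i j ≤ e I J ↔ i ≤ I ∧ j ≤ J := by
  rw [Finsupp.le_def]
  constructor
  · intro h; exact ⟨by simpa [e_apply0] using h 0, by simpa [e_apply1] using h 1⟩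
  · rintro ⟨h1, h2⟩ s
    fin_cases s
    · simpa [e_apply0] using h1
    · simpa [e_apply1] using h2

lemma e_sub {i j I J : ℕ} : e I J - e i j = e (I - i) (J - j) := by
  ext s; fin_cases s
  · simp [Finsupp.tsub_apply, e_apply0]
  · simp [Finsupp.tsub_apply, e_apply1]

lemma e_eq {i j I J : ℕ} : e i j = e I J ↔ i = I ∧ j = J := by
  constructor
  · intro h; exact ⟨by rw [← e_apply0 i j, h, e_apply0], by rw [← e_apply1 i j, h, e_apply1]⟩
  · rintro ⟨rfl, rfl⟩; rfl

lemma d_eq (d : Fin 2 →₀ ℕ) : d = e (d 0) (d 1) := by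
  ext s; fin_cases s
  · simp [e_apply0]
  · simp [e_apply1]

lemma weight_e (i j : ℕ) : (Finsupp.weight w) (e i j) = i + 2 * j := by
  rw [e, map_add]
  simp [Finsupp.weight_apply, Finsupp.sum_single_index, w]
  ring

lemma mono_eq (i j : ℕ) (r : ℚ) : (monomial (e i j)) r = C r * a^i * c^j := by
  simp [e, a, c, X_pow_eq_monomial, monomial_mul, C_mul_monomial]

lemma homog_ac (i j : ℕ) : a^i * c^j ∈ weightedHomogeneousSubmodule ℚ w (i + 2*j) := by
  rw [show a^i*c^j = (monomial (e i j)) 1 by rw [mono_eq]; simp]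
  rw [mem_weightedHomogeneousSubmodule]
  intro d hd
  rw [coeff_monomial] at hd
  split_ifs at hd with h
  · rw [← h, weight_e]
  · simp at hd

lemma hp1 : p1 2 = 1944*a^9 - 31095*a^7*c + 77392*a^5*c^2 - 38005*a^3*c^3 + 2764*a*c^4 := by
  unfold p1
  norm_num [map_ofNat, map_neg]
  ring

lemma hp2 : p2 2 = 324*a^10 - 20475*a^8*c + 120382*a^6*c^2 - 133495*a^4*c^3
    + 27244*a^2*c^4 - 480*c^5 := by
  unfold p2
  norm_num [map_ofNat, map_neg]
  ring

/-- membership certificate helper -/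
lemma mem_I_of (m x y : MvPolynomial (Fin 2) ℚ) (D : ℚ) (hD : D ≠ 0)
    (h : C D * m = x * p1 2 + y * p2 2) :
    m ∈ Ideal.span {p1 2, p2 2} := by
  rw [Ideal.mem_span_pair]
  refine ⟨C D⁻¹ * x, C D⁻¹ * y, ?_⟩
  have h2 := congrArg (fun z => C D⁻¹ * z) h
  simp only [← mul_assoc, ← C_mul, inv_mul_cancel₀ hD, C_1, one_mul] at h2
  rw [h2]; ring


lemma p1m : p1 2 = (monomial (e 9 0)) (1944) + (monomial (e 7 1)) (-31095) + (monomial (e 5 2)) (77392) + (monomial (e 3 3)) (-38005) + (monomial (e 1 4)) (2764) := by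
  rw [hp1]; simp only [mono_eq, map_ofNat, map_neg]; ring

lemma p2m : p2 2 = (monomial (e 10 0)) (324) + (monomial (e 8 1)) (-20475) + (monomial (e 6 2)) (120382) + (monomial (e 4 3)) (-133495) + (monomial (e 2 4)) (27244) + (monomial (e 0 5)) (-480) := by
  rw [hp2]; simp only [mono_eq, map_ofNat, map_neg]; ring


/-- The socle functional: vanishes on the ideal, nonzero on `c^8`. -/
def phi (f : MvPolynomial (Fin 2) ℚ) : ℚ := 438555419396 * coeff (e 16 0) f + 58754649276 * coeff (e 14 1) f + 16401517956 * coeff (e 12 2) f + 8290200636 * coeff (e 10 3) f + 7289030916 * coeff (e 8 4) f + 11291814396 * coeff (e 6 5) f + 32898684276 * coeff (e 4 6) f + 212356969056 * coeff (e 2 7) f + 5430036927411 * coeff (e 0 8) f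

lemma phi_p1 (x : MvPolynomial (Fin 2) ℚ) : phi (x * p1 2) = 0 := by
  rw [p1m]; simp only [phi, mul_add, coeff_add, coeff_mul_monomial', e_le, e_sub]
  norm_num
  ring

lemma phi_p2 (x : MvPolynomial (Fin 2) ℚ) : phi (x * p2 2) = 0 := by
  rw [p2m]; simp only [phi, mul_add, coeff_add, coeff_mul_monomial', e_le, e_sub]
  norm_num
  ring

lemma c8_not_mem : c^8 ∉ Ideal.span {p1 2, p2 2} := by
  intro h
  rw [Ideal.mem_span_pair] at h
  obtain ⟨x, y, hxy⟩ := h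
  have hphi : phi (x * p1 2 + y * p2 2) = 0 := by
    have h1 := phi_p1 x
    have h2 := phi_p2 y
    simp only [phi, coeff_add] at h1 h2 ⊢
    linarith
  rw [hxy] at hphi
  have hc8 : c^8 = (monomial (e 0 8)) (1:ℚ) := by rw [mono_eq]; simp
  rw [hc8] at hphi
  simp only [phi, coeff_monomial, e_eq] at hphi
  norm_num at hphi


lemma mem17_17_0 : a^17 ∈ Ideal.span {p1 2, p2 2} := by
  apply mem_I_of _ (968395292809596*a^8 + (-11348397562879409)*a^6*c + 14238029194003139*a^4*c^2 + (-2979950403593036)*a^2*c^3 + 52626650327520*c^4) ((-2422541631177576)*a^7 + 7938261091947809*a^5*c + (-4126225215886529)*a^3*c^2 + 303041794802636*a*c^3) 1097656960720320000 (by norm_num)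
  rw [hp1, hp2]
  norm_num [map_ofNat]
  ring


lemma mem17_15_1 : a^15*c ∈ Ideal.span {p1 2, p2 2} := by
  apply mem_I_of _ (3946998774564*a^8 + (-141828917802631)*a^6*c + 205571895728101*a^4*c^2 + (-44245526007124)*a^2*c^3 + 783395323680*c^4) ((-23681992647384)*a^7 + 109630951150231*a^5*c + (-60767684725111)*a^3*c^2 + 4511051405524*a*c^3) 121961884524480000 (by norm_num)
  rw [hp1, hp2]
  norm_num [map_ofNat]
  ring


lemma mem17_13_2 : a^13*c^2 ∈ Ideal.span {p1 2, p2 2} := by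
  apply mem_I_of _ (58754649276*a^8 + (-3274412000129)*a^6*c + 6071485025459*a^4*c^2 + (-1366863144716)*a^2*c^3 + 24298545120*c^4) ((-352527895656)*a^7 + 3007481740529*a^5*c + (-1853165356049)*a^3*c^2 + 139919122316*a*c^3) 13551320502720000 (by norm_num)
  rw [hp1, hp2]
  norm_num [map_ofNat]
  ring


lemma mem17_11_3 : a^11*c^3 ∈ Ideal.span {p1 2, p2 2} := by
  apply mem_I_of _ (5467172652*a^8 + (-325910055333)*a^6*c + 939853957343*a^4*c^2 + (-228764908732)*a^2*c^3 + 4093926240*c^4) ((-32803035912)*a^7 + 407187410133*a^5*c + (-303417894773)*a^3*c^2 + 23574191932*a*c^3) 4517106834240000 (by norm_num)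
  rw [hp1, hp2]
  norm_num [map_ofNat]
  ring


lemma mem17_9_4 : a^9*c^4 ∈ Ideal.span {p1 2, p2 2} := by
  apply mem_I_of _ (2763400212*a^8 + (-169164368523)*a^6*c + 700829587633*a^4*c^2 + (-198726633092)*a^2*c^3 + 3599521440*c^4) ((-16580401272)*a^7 + 232406623323*a^5*c + (-252889963963)*a^3*c^2 + 20727244292*a*c^3) 4517106834240000 (by norm_num)
  rw [hp1, hp2]
  norm_num [map_ofNat]
  ring


lemma mem17_7_5 : a^7*c^5 ∈ Ideal.span {p1 2, p2 2} := by
  apply mem_I_of _ (2429676972*a^8 + (-150778686213)*a^6*c + 733580610623*a^4*c^2 + (-300249817852)*a^2*c^3 + 5576204640*c^4) ((-14578061832)*a^7 + 216601097013*a^5*c + (-347956216853)*a^3*c^2 + 32109645052*a*c^3) 4517106834240000 (by norm_num)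
  rw [hp1, hp2]
  norm_num [map_ofNat]
  ring


lemma mem17_5_6 : a^5*c^6 ∈ Ideal.span {p1 2, p2 2} := by
  apply mem_I_of _ (3763938132*a^8 + (-235430302203)*a^6*c + 1247710203313*a^4*c^2 + (-817243219412)*a^2*c^3 + 16246263840*c^4) ((-22583628792)*a^7 + 346655445003*a^5*c + (-682468964443)*a^3*c^2 + 93551402612*a*c^3) 4517106834240000 (by norm_num)
  rw [hp1, hp2]
  norm_num [map_ofNat]
  ring


lemma mem17_3_7 : a^3*c^7 ∈ Ideal.span {p1 2, p2 2} := by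
  apply mem_I_of _ (10966228092*a^8 + (-689240753793)*a^6*c + 3839064976103*a^4*c^2 + (-3270612695272)*a^2*c^3 + 104867639040*c^4) ((-65797368552)*a^7 + 1029869650593*a^5*c + (-2272783828133)*a^3*c^2 + 603862821472*a*c^3) 4517106834240000 (by norm_num)
  rw [hp1, hp2]
  norm_num [map_ofNat]
  ring


lemma mem17_1_8 : a*c^8 ∈ Ideal.span {p1 2, p2 2} := by
  apply mem_I_of _ (70785656352*a^8 + (-4462293999708)*a^6*c + 25611126168943*a^4*c^2 + (-25326154760657)*a^2*c^3 + 2681499717240*c^4) ((-424713938112)*a^7 + 6727659373008*a^5*c + (-15878289350623)*a^3*c^2 + 6030329967107*a*c^3) 4517106834240000 (by norm_num)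
  rw [hp1, hp2]
  norm_num [map_ofNat]
  ring


lemma mem_c9 : c^9 ∈ Ideal.span {p1 2, p2 2} := by
  apply mem_I_of _ (7240049236548*a^9 + (-457247746628667)*a^7*c + 2672186648674382*a^5*c^2 + (-2880612201598843)*a^3*c^3 + 507485200094760*a*c^4) ((-43440295419288)*a^8 + 693144758477367*a^6*c + (-1702477913479952)*a^4*c^2 + 785740148878393*a^2*c^3 + (-37642556952000)*c^4) 18068427336960000 (by norm_num)
  rw [hp1, hp2]
  norm_num [map_ofNat]
  ring


lemma red16_16_0 : C ((438555419396 : ℚ)/5430036927411) * c^8 - a^16 ∈ Ideal.span {p1 2, p2 2} := by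
  apply mem_I_of _ ((-34753012100578156356)*a^7 + 404700109498438835119*a^5*c + (-493633059606064923785)*a^3*c^2 + 89232512751051398520*a*c^3) (86763612602288531736*a^6 + (-280546160804275247119)*a^4*c + 137092069320545538155*a^2*c^2 + (-6637588899208787520)*c^3) 39448445040382451673600 (by norm_num)
  rw [hp1, hp2, mul_sub, ← mul_assoc, ← C_mul]
  norm_num [map_ofNat]
  ring


lemma red16_14_1 : C ((6528294364 : ℚ)/603337436379) * c^8 - a^14*c ∈ Ideal.span {p1 2, p2 2} := by
  apply mem_I_of _ ((-141107085169745436)*a^7 + 5050305747416048921*a^5*c + (-7119099135438397807)*a^3*c^2 + 1324219295175685320*a*c^3) (846642511018472616*a^6 + (-3869365226139818681)*a^4*c + 2017202790162553597*a^2*c^2 + (-98806518594463680)*c^3) 4383160560042494630400 (by norm_num)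
  rw [hp1, hp2, mul_sub, ← mul_assoc, ← C_mul]
  norm_num [map_ofNat]
  ring


lemma red16_12_2 : C ((202487876 : ℚ)/67037492931) * c^8 - a^12*c^2 ∈ Ideal.span {p1 2, p2 2} := by
  apply mem_I_of _ ((-22950746283852)*a^7 + 1277199521749453*a^5*c + (-2306166820678235)*a^3*c^2 + 449182900527720*a*c^3) (137704477703112*a^6 + (-1163673287055853)*a^4*c + 675050004989825*a^2*c^2 + (-33677783536320)*c^3) 5351844395656281600 (by norm_num)
  rw [hp1, hp2, mul_sub, ← mul_assoc, ← C_mul]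
  norm_num [map_ofNat]
  ring


lemma red16_10_3 : C ((34116052 : ℚ)/22345830977) * c^8 - a^10*c^3 ∈ Ideal.span {p1 2, p2 2} := by
  apply mem_I_of _ ((-5836350178836)*a^7 + 347514150278107*a^5*c + (-980968081930301)*a^3*c^2 + 207027708855000*a*c^3) (35018101073016*a^6 + (-432262955189947)*a^4*c + 304037704705991*a^2*c^2 + (-15646986089280)*c^3) 4919372121259814400 (by norm_num)
  rw [hp1, hp2, mul_sub, ← mul_assoc, ← C_mul]
  norm_num [map_ofNat]
  ring


lemma red16_8_4 : C ((29996012 : ℚ)/22345830977) * c^8 - a^8*c^4 ∈ Ideal.span {p1 2, p2 2} := by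
  apply mem_I_of _ ((-10655370451404)*a^7 + 651587500298541*a^5*c + (-2661267761387515)*a^3*c^2 + 657799241702760*a*c^3) (63932222708424*a^6 + (-891983286456141)*a^4*c + 924727332162145*a^2*c^2 + (-50443693460160)*c^3) 18037697777952652800 (by norm_num)
  rw [hp1, hp2, mul_sub, ← mul_assoc, ← C_mul]
  norm_num [map_ofNat]
  ring


lemma red16_6_5 : C ((46468372 : ℚ)/22345830977) * c^8 - a^6*c^5 ∈ Ideal.span {p1 2, p2 2} := by
  apply mem_I_of _ ((-33386016564)*a^7 + 2069723811987*a^5*c + (-9951135237445)*a^3*c^2 + 3621432378520*a*c^3) (200316099384*a^6 + (-2963608458867)*a^4*c + 4606615919455*a^2*c^2 + (-286245171520)*c^3) 66072153032793600 (by norm_num)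
  rw [hp1, hp2, mul_sub, ← mul_assoc, ← C_mul]
  norm_num [map_ofNat]
  ring


lemma red16_4_6 : C ((193132 : ℚ)/31877077) * c^8 - a^4*c^6 ∈ Ideal.span {p1 2, p2 2} := by
  apply mem_I_of _ ((-18998006652)*a^7 + 1187106466113*a^5*c + (-6223585024135)*a^3*c^2 + 3781295325960*a*c^3) (113988039912*a^6 + (-1742508857313)*a^4*c + 3339634281925*a^2*c^2 + (-324786221760)*c^3) 25731380567692800 (by norm_num)
  rw [hp1, hp2, mul_sub, ← mul_assoc, ← C_mul]
  norm_num [map_ofNat]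
  ring


lemma red16_2_7 : C ((873896992 : ℚ)/22345830977) * c^8 - a^2*c^7 ∈ Ideal.span {p1 2, p2 2} := by
  apply mem_I_of _ ((-32736048183972)*a^7 + 2055418775629623*a^5*c + (-11330574376216193)*a^3*c^2 + 9105135032860920*a*c^3) (196416289103832*a^6 + (-3061845675011223)*a^4*c + 6596036252682323*a^2*c^2 + (-1469615093506560)*c^3) 18037697777952652800 (by norm_num)
  rw [hp1, hp2, mul_sub, ← mul_assoc, ← C_mul]
  norm_num [map_ofNat]
  ring


lemma mem_high (i j : ℕ) (h : 17 ≤ i + 2*j) : a^i * c^j ∈ Ideal.span {p1 2, p2 2} := by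
  by_cases hj : 9 ≤ j
  · have hrw : a^i*c^j = (a^i * c^(j-9)) * c^9 := by
      rw [mul_assoc, ← pow_add]; congr 2; omega
    rw [hrw]; exact Ideal.mul_mem_left _ _ mem_c9
  · push_neg at hj
    have hj8 : j ≤ 8 := by omega
    have hi : 17 - 2*j ≤ i := by omega
    have hrw : a^i*c^j = a^(i-(17-2*j)) * (a^(17-2*j) * c^j) := by
      rw [← mul_assoc, ← pow_add]; congr 2; omega
    rw [hrw]
    apply Ideal.mul_mem_left
    interval_cases j
    · simpa using mem17_17_0
    · simpa using mem17_15_1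
    · simpa using mem17_13_2
    · simpa using mem17_11_3
    · simpa using mem17_9_4
    · simpa using mem17_7_5
    · simpa using mem17_5_6
    · simpa using mem17_3_7
    · simpa using mem17_1_8

lemma key16 (i j : ℕ) (h : i + 2*j = 16) :
    (Ideal.Quotient.mkₐ ℚ (Ideal.span {p1 2, p2 2})) (a^i * c^j) ∈
      Submodule.span ℚ {(Ideal.Quotient.mkₐ ℚ (Ideal.span {p1 2, p2 2})) (c^8)} := by
  have hj : j ≤ 8 := by omega
  have main : ∀ (ρ : ℚ), (C ρ * c^8 - a^i*c^j ∈ Ideal.span {p1 2, p2 2}) →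
      (Ideal.Quotient.mkₐ ℚ (Ideal.span {p1 2, p2 2})) (a^i * c^j) ∈
      Submodule.span ℚ {(Ideal.Quotient.mkₐ ℚ (Ideal.span {p1 2, p2 2})) (c^8)} := by
    intro ρ hmem
    rw [Submodule.mem_span_singleton]
    refine ⟨ρ, ?_⟩
    rw [← map_smul, Ideal.Quotient.mkₐ_eq_mk, Ideal.Quotient.mk_eq_mk_iff_sub_mem,
      smul_eq_C_mul]
    exact hmem
  interval_cases j
  · -- j = 0
    have hi : i = 16 := by omega
    subst hi
    refine main ((438555419396 : ℚ)/5430036927411) ?_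
    simpa using red16_16_0
  · -- j = 1
    have hi : i = 14 := by omega
    subst hi
    refine main ((6528294364 : ℚ)/603337436379) ?_
    simpa using red16_14_1
  · -- j = 2
    have hi : i = 12 := by omega
    subst hi
    refine main ((202487876 : ℚ)/67037492931) ?_
    simpa using red16_12_2
  · -- j = 3
    have hi : i = 10 := by omega
    subst hi
    refine main ((34116052 : ℚ)/22345830977) ?_
    simpa using red16_10_3
  · -- j = 4
    have hi : i = 8 := by omega
    subst hi
    refine main ((29996012 : ℚ)/22345830977) ?_
    simpa using red16_8_4
  · -- j = 5
    have hi : i = 6 := by omega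
    subst hi
    refine main ((46468372 : ℚ)/22345830977) ?_
    simpa using red16_6_5
  · -- j = 6
    have hi : i = 4 := by omega
    subst hi
    refine main ((193132 : ℚ)/31877077) ?_
    simpa using red16_4_6
  · -- j = 7
    have hi : i = 2 := by omega
    subst hi
    refine main ((873896992 : ℚ)/22345830977) ?_
    simpa using red16_2_7
  · -- j = 8
    have hi : i = 0 := by omega
    subst hi
    simp only [pow_zero, one_mul]
    exact Submodule.mem_span_singleton_self _

lemma hc8W : c^8 ∈ weightedHomogeneousSubmodule ℚ w 16 := by
  simpa using homog_ac 0 8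

end AuxK3

/-- The degree 16 piece of `ℚ[a,c]/(p₁(2), p₂(2))` is 1-dimensional and all pieces of
degree > 16 vanish. -/
theorem stmt_7 :
    Module.finrank ℚ (piece (Ideal.span {p1 2, p2 2}) 16) = 1 ∧
    ∀ i : ℕ, 16 < i → piece (Ideal.span {p1 2, p2 2}) i = ⊥ := by
  set I : Ideal (MvPolynomial (Fin 2) ℚ) := Ideal.span {p1 2, p2 2} with hI
  constructor
  · -- finrank of degree 16 piece is 1
    have hne : (Ideal.Quotient.mkₐ ℚ I) (c^8) ≠ 0 := by
      rw [Ideal.Quotient.mkₐ_eq_mk, Ne, Ideal.Quotient.eq_zero_iff_mem]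
      exact c8_not_mem
    have heq : piece I 16 = Submodule.span ℚ {(Ideal.Quotient.mkₐ ℚ I) (c^8)} := by
      apply le_antisymm
      · rintro x ⟨f, hf, rfl⟩
        show (Ideal.Quotient.mkₐ ℚ I).toLinearMap f ∈ _
        rw [f.as_sum, map_sum]
        apply Submodule.sum_mem
        intro d hd
        have hw : d 0 + 2 * d 1 = 16 := by
          have h16 := (mem_weightedHomogeneousSubmodule ℚ w 16 f).mp hf
            (mem_support_iff.mp hd)
          rwa [d_eq d, weight_e] at h16
        rw [d_eq d, mono_eq]
        have : C (coeff (e (d 0) (d 1)) f) * a^(d 0) * c^(d 1)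
            = (coeff (e (d 0) (d 1)) f) • (a^(d 0) * c^(d 1)) := by
          rw [smul_eq_C_mul, mul_assoc]
        rw [this, map_smul]
        exact Submodule.smul_mem _ _ (key16 _ _ hw)
      · rw [Submodule.span_le, Set.singleton_subset_iff]
        exact ⟨c^8, hc8W, rfl⟩
    rw [heq, finrank_span_singleton hne]
  · -- all higher pieces vanish
    intro i hi
    rw [eq_bot_iff]
    rintro x ⟨f, hf, rfl⟩
    rw [Submodule.mem_bot]
    show (Ideal.Quotient.mkₐ ℚ I).toLinearMap f = 0
    rw [AlgHom.toLinearMap_apply, Ideal.Quotient.mkₐ_eq_mk,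
      Ideal.Quotient.eq_zero_iff_mem]
    rw [f.as_sum]
    apply Ideal.sum_mem
    intro d hd
    have hw : d 0 + 2 * d 1 = i := by
      have h' := (mem_weightedHomogeneousSubmodule ℚ w i f).mp hf
        (mem_support_iff.mp hd)
      rwa [d_eq d, weight_e] at h'
    rw [d_eq d, mono_eq, mul_assoc]
    exact Ideal.mul_mem_left _ _ (mem_high _ _ (by omega))
end

section
/- For every integer N ≥ 2, the two polynomials p₁(N, a, c) and p₂(N, a, c) in ℚ[a, c] form a regular sequence; equivalently, the graded quotient ℚ[a, c]/(p₁(N), p₂(N)) is a finite-dimensional ℚ-vector space (a graded complete intersection with Hilbert series (1−t⁹)(1−t¹⁰)/((1−t)(1−t²))). -/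
open MvPolynomial

/-!
Write `p₁ = a · f(a², c)` and `p₂ = g(a², c)` with binary forms `f, g` of degrees 4 and 5. The
Sylvester matrix of `f` and `g` gives a Bézout identity putting `Res(f, g) · a¹⁷` into
`I = (p₁, p₂)`, and `Res(f, g)` does not vanish for `N ≥ 2`, so `a ∈ √I`. Modulo `a`, `p₂` is a
nonzero multiple of `c⁵`, so `c ∈ √I` as well. Hence `ℚ[a, c] ⧸ I` is finite-dimensional, and
every common divisor of `p₁` and `p₂` divides a power of `a` and a power of `c`, so `p₁` and `p₂`
are coprime; in the factorial ring `ℚ[a, c]` this makes them a regular sequence.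
-/

theorem IsRelPrime.of_mem_radical_span_pair {R : Type*} [CommSemiring R] [DecompositionMonoid R]
    {f g x y : R} (hxy : IsRelPrime x y) (hx : x ∈ (Ideal.span {f, g}).radical)
    (hy : y ∈ (Ideal.span {f, g}).radical) : IsRelPrime f g := by
  intro d hdf hdg
  have hle : Ideal.span {f, g} ≤ Ideal.span {d} := by
    rw [Ideal.span_le, Set.insert_subset_iff, Set.singleton_subset_iff]
    exact ⟨Ideal.mem_span_singleton.mpr hdf, Ideal.mem_span_singleton.mpr hdg⟩
  obtain ⟨m, hm⟩ := hx
  obtain ⟨n, hn⟩ := hy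
  exact hxy.pow (Ideal.mem_span_singleton.mp (hle hm)) (Ideal.mem_span_singleton.mp (hle hn))

theorem RingTheory.Sequence.isRegular_pair_of_isRelPrime {R : Type*} [CommRing R] [IsDomain R]
    [DecompositionMonoid R] {f g : R} (hf : f ≠ 0) (hfg : IsRelPrime f g)
    (hI : Ideal.span {f, g} ≠ ⊤) : IsRegular R [f, g] := by
  rw [isRegular_iff, isWeaklyRegular_cons_iff, isWeaklyRegular_singleton_iff]
  refine ⟨⟨fun x y h => mul_left_cancel₀ hf h, ?_⟩, ?_⟩
  · rw [isSMulRegular_quotient_iff_mem_of_smul_mem]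
    intro x hx
    obtain ⟨y, -, hy⟩ := (Submodule.mem_smul_pointwise_iff_exists _ _ _).mp hx
    obtain ⟨z, rfl⟩ := hfg.dvd_of_dvd_mul_left ⟨y, hy.symm⟩
    exact Submodule.smul_mem_pointwise_smul _ _ _ Submodule.mem_top
  · have hofList : Ideal.ofList [f, g] = Ideal.span {f, g} := by
      simp only [Ideal.ofList_cons, Ideal.ofList_nil, bot_le, sup_of_le_left, Ideal.span_insert]
    rw [smul_eq_mul, Ideal.mul_top, hofList]
    exact hI.symm

theorem MvPolynomial.isRelPrime_X_X {σ R : Type*} [CommRing R] [IsDomain R] {i j : σ}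
    (hij : i ≠ j) : IsRelPrime (X i : MvPolynomial σ R) (X j) :=
  X_prime.irreducible.isRelPrime_iff_not_dvd.mpr (by simpa using hij)

theorem MvPolynomial.finite_quotient_of_forall_X_mem_radical {σ R : Type*} [Finite σ]
    [CommRing R] {I : Ideal (MvPolynomial σ R)} (hX : ∀ i, X i ∈ I.radical) :
    Module.Finite R (MvPolynomial σ R ⧸ I) := by
  have hint : ∀ x ∈ Ideal.Quotient.mkₐ R I '' Set.range X, IsIntegral R x := by
    rintro _ ⟨_, ⟨i, rfl⟩, rfl⟩
    obtain ⟨n, hn⟩ := hX i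
    refine IsIntegral.of_pow n.succ_pos ?_
    rw [← map_pow, Ideal.Quotient.mkₐ_eq_mk,
      Ideal.Quotient.eq_zero_iff_mem.mpr (I.pow_mem_of_pow_mem hn n.le_succ)]
    exact isIntegral_zero
  have htop : Algebra.adjoin R (Ideal.Quotient.mkₐ R I '' Set.range X) = ⊤ := by
    rw [← AlgHom.map_adjoin, adjoin_range_X, Algebra.map_top, AlgHom.range_eq_top]
    exact Ideal.Quotient.mkₐ_surjective R I
  rw [Module.finite_def, ← Algebra.top_toSubmodule, ← htop]
  exact fg_adjoin_of_finite ((Set.finite_range X).image _) hint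

def resultantCore (N : ℚ) : ℚ :=
  -1982333728375 + 27061130346250 * N - 167695030997620 * N ^ 2 + 625790422404504 * N ^ 3
  - 1571447369309184 * N ^ 4 + 2807779438705536 * N ^ 5 - 3676426006026240 * N ^ 6
  + 3575047744991232 * N ^ 7 - 2583853556170752 * N ^ 8 + 1371750395609088 * N ^ 9
  - 520252053258240 * N ^ 10 + 133545435070464 * N ^ 11 - 20804234379264 * N ^ 12
  + 1486016741376 * N ^ 13

/- The resultant of `f` and `g` divided by `576 N (N - 1)³ (2N - 1)² (3N - 2)² (4N - 3)² (6N - 5)³`;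
the same factor divides the whole Bézout identity below. -/
def resultant (N : ℚ) : ℚ :=
  104976 * (N - 1) * (2 * N - 1) ^ 3 * (2 * N - 3) * (3 * N - 1) ^ 2 * (3 * N - 2) ^ 2
    * (3 * N - 4) ^ 2 * (4 * N - 1) ^ 2 * (4 * N - 3) ^ 2 * (6 * N - 1) ^ 2 * (6 * N - 5) ^ 2
    * resultantCore N

/- `bezoutCoeff₁ = u(a², c)` and `bezoutCoeff₂ = a · v(a², c)`, where `u f + v g = Res(f, g) · x⁸`
is the identity given by the adjugate of the Sylvester matrix of `f` and `g`, divided by the same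
factor as `resultant`. -/
set_option maxHeartbeats 1000000 in
noncomputable def bezoutCoeff₁ (N : ℚ) : MvPolynomial (Fin 2) ℚ :=
  C (
      -10882259634026781000 + 609555926817086850720 * N - 16177604974728863217048 * N ^ 2
      + 271140803396211048955776 * N ^ 3 - 3227019302767453046374500 * N ^ 4
      + 29074188834761600162572272 * N ^ 5 - 206410242746347968531506004 * N ^ 6
      + 1186685127549347318276083272 * N ^ 7 - 5634261875199475058383833120 * N ^ 8
      + 22416301796147566051285677600 * N ^ 9 - 75564828416695538470865146992 * N ^ 10
      + 217664965025292404845862044704 * N ^ 11 - 539255963861621601084700429536 * N ^ 12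
      + 1154713352439810400898630851584 * N ^ 13 - 2144792843423077145883006925728 * N ^ 14
      + 3464059372420929794087321340288 * N ^ 15 - 4871621485284141586853128788072 * N ^ 16
      + 5967788418792655964909974676628 * N ^ 17 - 6364042845423880101690822842520 * N ^ 18
      + 5898006999611926042091230610064 * N ^ 19 - 4737004929118009974932828437536 * N ^ 20
      + 3283456284233188874241632290944 * N ^ 21 - 1953019980246651297173825513472 * N ^ 22
      + 989228916067235865880496265216 * N ^ 23 - 422335370739467482706364530688 * N ^ 24
      + 149909473520286309789751296000 * N ^ 25 - 43418381715614067908296310784 * N ^ 26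
      + 9993489647891060867283025920 * N ^ 27 - 1757684410831905906122293248 * N ^ 28
      + 221809699128733942312599552 * N ^ 29 - 17877495811929688246321152 * N ^ 30
      + 691140302007591040450560 * N ^ 31) * a ^ 8
  + C (
      41541730127676528750 - 2493994132068593183400 * N + 71242617096964991085950 * N ^ 2
      - 1290543686829502269444548 * N ^ 3 + 16669553570210765645474872 * N ^ 4
      - 163665542483261036009529128 * N ^ 5 + 1271423580084125324945244496 * N ^ 6
      - 8031509676012286294454207048 * N ^ 7 + 42074600269068883831912686596 * N ^ 8
      - 185493518696834946986662562448 * N ^ 9 + 695965871947656038377905511812 * N ^ 10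
      - 2241636726731914100732689153368 * N ^ 11 + 6240136161440058987451972718664 * N ^ 12
      - 15092055650742426913851427732416 * N ^ 13 + 31839118734141105854579433902232 * N ^ 14
      - 58763007348657466299186853504800 * N ^ 15 + 95069630454047394609862051377030 * N ^ 16
      - 134978295638590650329352897315735 * N ^ 17 + 168228891386461507578043677749226 * N ^ 18
      - 183959750526306542278013404829556 * N ^ 19 + 176249369940995933944702679030760 * N ^ 20
      - 147606569910846234610664430838464 * N ^ 21 + 107693445114488771709027259187520 * N ^ 22
      - 68135287704072718383004506729984 * N ^ 23 + 37152843242549275614287794341888 * N ^ 24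
      - 17320379277367103724745999441920 * N ^ 25 + 6831010032374914298067223461888 * N ^ 26
      - 2247462103501545458210431303680 * N ^ 27 + 605247505788559238009815302144 * N ^ 28
      - 129908077340011515949816479744 * N ^ 29 + 21364694259600256201314533376 * N ^ 30
      - 2527393830978629910990422016 * N ^ 31 + 191410591145420252088631296 * N ^ 32
      - 6968832201896368401285120 * N ^ 33) * a ^ 6 * c
  + C (
      -13153404282485717250 + 868143079110480152280 * N - 27313414286114252819452 * N ^ 2
      + 545910127843050536106020 * N ^ 3 - 7793819745917114444394462 * N ^ 4
      + 84730382027969172174472476 * N ^ 5 - 730187302535892259331177028 * N ^ 6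
      + 5126899573091473016013084960 * N ^ 7 - 29915947974013413503664036740 * N ^ 8
      + 147239049399359935346206611160 * N ^ 9 - 618258104378053698487285425168 * N ^ 10
      + 2234684955527535695085881979624 * N ^ 11 - 7001941388718562714743362778852 * N ^ 12
      + 19124581664527503386931340632072 * N ^ 13 - 45733367034489926499895006300512 * N ^ 14
      + 96073498173001700375488168249392 * N ^ 15 - 177741101712861229089908618091306 * N ^ 16
      + 290090103718792023413702345563146 * N ^ 17 - 418092260650032604343351757740154 * N ^ 18
      + 532276032791476598829007225166307 * N ^ 19 - 598352039681251326702703845311322 * N ^ 20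
      + 593264002864140448967453173240284 * N ^ 21 - 517832991787402173976075252473624 * N ^ 22
      + 396812278528824664541055993482016 * N ^ 23 - 265952101479634896909743854035072 * N ^ 24
      + 155130149820157260283286658443520 * N ^ 25 - 78248555014922850973750944823296 * N ^ 26
      + 33848661901256936499340780498944 * N ^ 27 - 12422538927404665536895646810112 * N ^ 28
      + 3813405706012289456245246820352 * N ^ 29 - 960559146695180934270269521920 * N ^ 30
      + 193286835959324639214656028672 * N ^ 31 - 29866097663167666495929974784 * N ^ 32
      + 3326236718697109104686530560 * N ^ 33 - 237615495251662002764906496 * N ^ 34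
      + 8174845020125986333655040 * N ^ 35) * a ^ 4 * c ^ 2
  + C (
      287718852551130000 - 24665543332740153900 * N + 969832477940445207780 * N ^ 2
      - 23607207542286532600308 * N ^ 3 + 403067441372846343471870 * N ^ 4
      - 5171661677697020752315904 * N ^ 5 + 52088151807645757655472458 * N ^ 6
      - 424329690391261482076459876 * N ^ 7 + 2857201611917598447081298592 * N ^ 8
      - 16163469977582226167316713968 * N ^ 9 + 77795771512494069667669134632 * N ^ 10
      - 321744415314838787178525472304 * N ^ 11 + 1152470904971976643546889647620 * N ^ 12
      - 3598014023750682602000279276256 * N ^ 13 + 9840446244602010395277159494988 * N ^ 14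
      - 23672366601890840979767363376360 * N ^ 15 + 50247934775938847431207884997440 * N ^ 16
      - 94337886390373151666152142959791 * N ^ 17 + 156923282705541326937472113128952 * N ^ 18
      - 231518289536014172787607280878980 * N ^ 19 + 303092929934361116519203330780698 * N ^ 20
      - 352037749489749831548888748370773 * N ^ 21 + 362479296523150713537651795272622 * N ^ 22
      - 330389063825832148649098614363036 * N ^ 23 + 265990836845575586898310665574584 * N ^ 24
      - 188580258388589097401840535501888 * N ^ 25 + 117269106628297432663267549380288 * N ^ 26
      - 63634332144137293354711591346688 * N ^ 27 + 29933205138970862816623050381312 * N ^ 28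
      - 12103056380958690267800281718784 * N ^ 29 + 4160744031798080287042353610752 * N ^ 30
      - 1198815885274392365689820676096 * N ^ 31 + 283962323718213397941414002688 * N ^ 32
      - 53827645312110991982116995072 * N ^ 33 + 7848244702141339930227376128 * N ^ 34
      - 826078403160443999068618752 * N ^ 35 + 55854977818715435927863296 * N ^ 36
      - 1821357972349416388952064 * N ^ 37) * a ^ 2 * c ^ 3
  + C (
      -287718852551130000 * N ^ 2 + 18613856800748052900 * N ^ 3 - 575880510736019491050 * N ^ 4
      + 11357150626375068273796 * N ^ 5 - 160562078465953399440008 * N ^ 6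
      + 1734969230388851804397428 * N ^ 7 - 14918311280102479443101266 * N ^ 8
      + 104930085051005364612023484 * N ^ 9 - 615869800336171504503759276 * N ^ 10
      + 3061875266992815241577931752 * N ^ 11 - 13044006832378967425233852928 * N ^ 12
      + 48050770272323384821885744672 * N ^ 13 - 154165918495816983059494700468 * N ^ 14
      + 433290344883851748078986120544 * N ^ 15 - 1071694591968235455484860620556 * N ^ 16
      + 2341235985749839707032474280864 * N ^ 17 - 4530288807797404254999896900466 * N ^ 18
      + 7780806622134082107680668154901 * N ^ 19 - 11878713338438293685318637172674 * N ^ 20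
      + 16133295854723614319649684405546 * N ^ 21 - 19498098393822793583659473649494 * N ^ 22
      + 20961733169041693042986718778961 * N ^ 23 - 20026880741717494065732314314854 * N ^ 24
      + 16976691497322170615283204003840 * N ^ 25 - 12739039688170706038200057625776 * N ^ 26
      + 8435276637335169219621512973648 * N ^ 27 - 4908623306820730952081615346528 * N ^ 28
      + 2497086906844363223042425122432 * N ^ 29 - 1103090360206713762851690692608 * N ^ 30
      + 419544217961173455349262137344 * N ^ 31 - 135878194986431352384064536576 * N ^ 32
      + 36937131859121115855993421824 * N ^ 33 - 8266199257929425999681028096 * N ^ 34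
      + 1482368837247133509063278592 * N ^ 35 - 204725056330592366591213568 * N ^ 36
      + 20435315519192407360929792 * N ^ 37 - 1311811396751662994423808 * N ^ 38
      + 40655311882799472967680 * N ^ 39) * c ^ 4

set_option maxHeartbeats 1000000 in
noncomputable def bezoutCoeff₂ (N : ℚ) : MvPolynomial (Fin 2) ℚ :=
  C (
      -15782709806787924000 + 914299497477189227880 * N - 25151286097115609607792 * N ^ 2
      + 437890710542975398542744 * N ^ 3 - 5425589057435585919832860 * N ^ 4
      + 51000586973268848973404640 * N ^ 5 - 378591580935478465380414108 * N ^ 6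
      + 2280892744931648339924968392 * N ^ 7 - 11373864903699657900941153520 * N ^ 8
      + 47635587819408407249956439952 * N ^ 9 - 169438219348850241893252785152 * N ^ 10
      + 516269261189813207495572439856 * N ^ 11 - 1356465260397387743438864297760 * N ^ 12
      + 3088999313715358803063975467616 * N ^ 13 - 6120061269860514209139207268992 * N ^ 14
      + 10577793729686391243118417699872 * N ^ 15 - 15976380621464923326514770770208 * N ^ 16
      + 21103097790840581175724768001112 * N ^ 17 - 24375090821406379486052134680900 * N ^ 18
      + 24593769055282762435945599059256 * N ^ 19 - 21632235101838828597626847771984 * N ^ 20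
      + 16535496161505425283446893170336 * N ^ 21 - 10936078190050118581965228444288 * N ^ 22
      + 6220931091968624191367212099584 * N ^ 23 - 3019809333089624406091328305152 * N ^ 24
      + 1237983399411929278671222079488 * N ^ 25 - 422703331469919026430572150784 * N ^ 26
      + 117962956380634209221253267456 * N ^ 27 - 26201067866334642581204631552 * N ^ 28
      + 4453390382992362221837746176 * N ^ 29 - 543820303805765607997046784 * N ^ 30
      + 42466510765559527810007040 * N ^ 31 - 1592494153708482292875264 * N ^ 32) * a ^ 7
  + C (
      15369371124408551250 - 961683664357847344200 * N + 28675645955417853634450 * N ^ 2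
      - 543035617335285663802756 * N ^ 3 + 7343266506800238424474448 * N ^ 4
      - 75587399540244925233768928 * N ^ 5 + 616487471741786323597525268 * N ^ 6
      - 4094438374233380589629185192 * N ^ 7 + 22584810459721435031476154008 * N ^ 8
      - 104998763096611053889857982392 * N ^ 9 + 416097101486096229937529495628 * N ^ 10
      - 1417939919589417294279029187960 * N ^ 11 + 4183692109121226996718709550552 * N ^ 12
      - 10745794353100309913703015035856 * N ^ 13 + 24127059075632335296112883879304 * N ^ 14
      - 47503084086813591752098386614400 * N ^ 15 + 82198825198003543482877403224026 * N ^ 16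
      - 125186391723008386540117329915573 * N ^ 17 + 167913069793822197526782954375666 * N ^ 18
      - 198339571959435683540365169601756 * N ^ 19 + 206139103473184577742795242040252 * N ^ 20
      - 188197167589213758529822452091800 * N ^ 21 + 150540724982014778850608050722576 * N ^ 22
      - 105129601650334286942316247394208 * N ^ 23 + 63788341155951394230527268379008 * N ^ 24
      - 33417341288089778242414836412416 * N ^ 25 + 14992164185618167240237308205056 * N ^ 26
      - 5698776958560473067634631196672 * N ^ 27 + 1809646681219326150654616289280 * N ^ 28
      - 470989485385970547822458830848 * N ^ 29 + 97819377266903956244792082432 * N ^ 30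
      - 15584581609312609863368441856 * N ^ 31 + 1787924130130923912614117376 * N ^ 32
      - 131449673222371662115110912 * N ^ 33 + 4650342213055601254072320 * N ^ 34) * a ^ 5 * c
  + C (
      -1512921632998025250 + 108353045012970717120 * N - 3682882796061909093338 * N ^ 2
      + 79239961275252826595092 * N ^ 3 - 1214324560334159809497484 * N ^ 4
      + 14138083123486218276823680 * N ^ 5 - 130249947315557892557985628 * N ^ 6
      + 976350211356626386047074936 * N ^ 7 - 6076378071320097752837544176 * N ^ 8
      + 31877950400037267661190974672 * N ^ 9 - 142637569573375687308073600224 * N ^ 10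
      + 549384088735705349922642929456 * N ^ 11 - 1834822435742391514372806770616 * N ^ 12
      + 5344674640401719854999035195696 * N ^ 13 - 13641794301192954123006129013128 * N ^ 14
      + 30621447289272399457819219808256 * N ^ 15 - 60616851247841513962630634009874 * N ^ 16
      + 106036337268251777429017143429960 * N ^ 17 - 164130246753643667420895374589384 * N ^ 18
      + 224951337395172039144737252636406 * N ^ 19 - 273003524022195697125574272526380 * N ^ 20
      + 293195344460676514277902437464352 * N ^ 21 - 278282202522877952710235642983932 * N ^ 22
      + 232947561999819547658916849617064 * N ^ 23 - 171480067152110506434959143535088 * N ^ 24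
      + 110576846005797229716937906100448 * N ^ 25 - 62145688756573979527575024077184 * N ^ 26
      + 30242809772581021368198456674304 * N ^ 27 - 12637327721121385792226673813504 * N ^ 28
      + 4485314585956595232554698899456 * N ^ 29 - 1333007680508515636636038414336 * N ^ 30
      + 325401535194763190003533873152 * N ^ 31 - 63516337030673152615411089408 * N ^ 32
      + 9528764022041847725310345216 * N ^ 33 - 1031218900826092272925802496 * N ^ 34
      + 71640080245743711298781184 * N ^ 35 - 2398663401085168905093120 * N ^ 36) * a ^ 3 * c ^ 2
  + C (
      -287718852551130000 * N + 20126778433746078150 * N ^ 2 - 671080151466504490920 * N ^ 3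
      + 14217998456699722868604 * N ^ 4 - 215290592987910162190748 * N ^ 5
      + 2484501526031111391945442 * N ^ 6 - 22753735126191994150563252 * N ^ 7
      + 170022290248040922517557684 * N ^ 8 - 1057596721375009566033076800 * N ^ 9
      + 5559799618357266173628205488 * N ^ 10 - 24991799097892754587485757144 * N ^ 11
      + 96946437811651976815687135388 * N ^ 12 - 326924224601583226294631102688 * N ^ 13
      + 964041361823582223739184671308 * N ^ 14 - 2497591030402390551464089672056 * N ^ 15
      + 5706193988302275600533626108200 * N ^ 16 - 11530134668988276322939200105579 * N ^ 17
      + 20650578644827069031971692743040 * N ^ 18 - 32832306565039840032621206933616 * N ^ 19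
      + 46380534177487161258521106877854 * N ^ 20 - 58233208709000645750196281047653 * N ^ 21
      + 64965624906760786407642833706786 * N ^ 22 - 64340605632360143317164913475820 * N ^ 23
      + 56480878884555848028128357270916 * N ^ 24 - 43847526739559094022860895459464 * N ^ 25
      + 30010432035192194158187761963440 * N ^ 26 - 18035220364703147498665374512352 * N ^ 27
      + 9467325540381429154115771329152 * N ^ 28 - 4312185850146909857201333231616 * N ^ 29
      + 1689796808589227475169366640640 * N ^ 30 - 563469565532951042082586312704 * N ^ 31
      + 157600116762659740504017321984 * N ^ 32 - 36265611448408643473323589632 * N ^ 33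
      + 6683099743948539128459821056 * N ^ 34 - 947927130537111954061787136 * N ^ 35
      + 97124703368836615627603968 * N ^ 36 - 6396435736227117080248320 * N ^ 37
      + 203276559413997364838400 * N ^ 38) * a * c ^ 3

set_option maxRecDepth 10000 in
set_option maxHeartbeats 1000000 in
theorem bezoutCoeff₁_mul_add_bezoutCoeff₂_mul (N : ℚ) :
    bezoutCoeff₁ N * p1 N + bezoutCoeff₂ N * p2 N = C (resultant N) * a ^ 17 := by
  simp only [bezoutCoeff₁, bezoutCoeff₂, resultant, resultantCore, p1, p2, a, c, map_add,
    map_sub, map_mul, map_pow, map_neg, map_ofNat, map_one]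
  ring

section

variable {N : ℚ}

theorem resultantCore_pos (hN : 2 ≤ N) : 0 < resultantCore N := by
  obtain ⟨M, rfl⟩ : ∃ M : ℚ≥0, N = M + 2 := ⟨⟨N - 2, by linarith⟩, by simp⟩
  have hshift : resultantCore (M + 2) =
      260072938125 + 4095208796250 * M + 29439328483100 * M ^ 2 + 128005179390360 * M ^ 3
      + 375777166563072 * M ^ 4 + 786792400477056 * M ^ 5 + 1209124073687040 * M ^ 6
      + 1381160354918400 * M ^ 7 + 1172835464380416 * M ^ 8 + 731284059783168 * M ^ 9
      + 325435946434560 * M ^ 10 + 97881033277440 * M ^ 11 + 17832200896512 * M ^ 12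
      + 1486016741376 * M ^ 13 := by
    unfold resultantCore
    ring
  rw [hshift]
  positivity

theorem resultant_pos (hN : 2 ≤ N) : 0 < resultant N := by
  have := resultantCore_pos hN
  obtain ⟨h₁, h₂, h₃, h₄, h₅, h₆, h₇, h₈, h₉, h₁₀⟩ : 0 < N - 1 ∧ 0 < 2 * N - 1 ∧ 0 < 2 * N - 3 ∧
      0 < 3 * N - 1 ∧ 0 < 3 * N - 2 ∧ 0 < 3 * N - 4 ∧ 0 < 4 * N - 1 ∧ 0 < 4 * N - 3 ∧
      0 < 6 * N - 1 ∧ 0 < 6 * N - 5 := by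
    refine ⟨?_, ?_, ?_, ?_, ?_, ?_, ?_, ?_, ?_, ?_⟩ <;> linarith
  unfold resultant
  positivity

theorem p1_ne_zero (hN : 2 ≤ N) : p1 N ≠ 0 := by
  have h : eval ![1, 0] (p1 N) = 1620 * N - 1296 := by simp [p1, a, c]
  intro h0
  rw [h0, map_zero] at h
  linarith

theorem span_p1_p2_ne_top : Ideal.span {p1 N, p2 N} ≠ ⊤ := by
  rw [Ne, Ideal.eq_top_iff_one, Ideal.mem_span_pair]
  rintro ⟨u, v, huv⟩
  simpa [p1, p2, a, c] using congrArg constantCoeff huv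

theorem a_mem_radical (hN : 2 ≤ N) : a ∈ (Ideal.span {p1 N, p2 N}).radical := by
  refine ⟨17, (Ideal.unit_mul_mem_iff_mem _ ((resultant_pos hN).ne'.isUnit.map C)).mp ?_⟩
  rw [← bezoutCoeff₁_mul_add_bezoutCoeff₂_mul]
  exact Ideal.add_mem _ (Ideal.mul_mem_left _ _ (Ideal.subset_span (by simp)))
    (Ideal.mul_mem_left _ _ (Ideal.subset_span (by simp)))

theorem c_mem_radical (hN : 2 ≤ N) : c ∈ (Ideal.span {p1 N, p2 N}).radical := by
  set J := (Ideal.span {p1 N, p2 N}).radical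
  have ha : Ideal.Quotient.mk J a = 0 := Ideal.Quotient.eq_zero_iff_mem.mpr (a_mem_radical hN)
  have hp2 : Ideal.Quotient.mk J (p2 N) = 0 :=
    Ideal.Quotient.eq_zero_iff_mem.mpr (Ideal.le_radical (Ideal.subset_span (by simp)))
  obtain ⟨r, hr, hc5⟩ : ∃ r : ℚ, r ≠ 0 ∧ Ideal.Quotient.mk J (C r * c ^ 5) = 0 := by
    refine ⟨-(N ^ 2 * (N - 1) ^ 2 * (2 * N - 1) * (2 * N - 3) * (3 * N - 1) * (3 * N - 2)
      * (3 * N - 4) * (3 * N - 5)), ?_, ?_⟩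
    · obtain ⟨h₀, h₁, h₂, h₃, h₄, h₅, h₆, h₇⟩ : 0 < N ∧ 0 < N - 1 ∧ 0 < 2 * N - 1 ∧
          0 < 2 * N - 3 ∧ 0 < 3 * N - 1 ∧ 0 < 3 * N - 2 ∧ 0 < 3 * N - 4 ∧ 0 < 3 * N - 5 := by
        refine ⟨?_, ?_, ?_, ?_, ?_, ?_, ?_, ?_⟩ <;> linarith
      rw [neg_ne_zero]
      positivity
    · rw [← hp2]
      simp only [p2, map_add, map_mul, map_pow, ha, zero_pow, ne_eq, OfNat.ofNat_ne_zero,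
        not_false_eq_true, mul_zero, zero_mul, zero_add]
      congr 3
      ring
  rw [Ideal.Quotient.eq_zero_iff_mem, Ideal.unit_mul_mem_iff_mem _ (hr.isUnit.map C)] at hc5
  exact Ideal.mem_radical_of_pow_mem hc5

theorem isRelPrime_p1_p2 (hN : 2 ≤ N) : IsRelPrime (p1 N) (p2 N) :=
  (isRelPrime_X_X (by decide)).of_mem_radical_span_pair (a_mem_radical hN) (c_mem_radical hN)

end

/-- For every `N ≥ 2`, the polynomials `p₁(N), p₂(N)` form a regular sequence in
`ℚ[a,c]`; equivalently, the quotient `ℚ[a,c]/(p₁(N), p₂(N))` is a finite-dimensional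
`ℚ`-vector space. -/
theorem stmt_9 (N : ℕ) (hN : 2 ≤ N) :
    RingTheory.Sequence.IsRegular (MvPolynomial (Fin 2) ℚ) [p1 (N : ℚ), p2 (N : ℚ)] ∧
    FiniteDimensional ℚ
      (MvPolynomial (Fin 2) ℚ ⧸ Ideal.span {p1 (N : ℚ), p2 (N : ℚ)}) := by
  have hN' : (2 : ℚ) ≤ N := by exact_mod_cast hN
  exact ⟨RingTheory.Sequence.isRegular_pair_of_isRelPrime (p1_ne_zero hN') (isRelPrime_p1_p2 hN')
      span_p1_p2_ne_top,
    finite_quotient_of_forall_X_mem_radical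
      (Fin.forall_fin_two.mpr ⟨a_mem_radical hN', c_mem_radical hN'⟩)⟩
end

section
/- In the ring R = ℚ[a, c][z]/(z² + c), for any integer N the element ∏_{k=0}^{3}(4a + (4N − 2k)z) · ∏_{k=0}^{5}(6a + (6N − 2k)z) has z-component (coefficient of z when written in the basis {1, z} over ℚ[a,c]) whose value at N = 2 is divisible in ℚ[a, c] by the homogeneous polynomial p₁(2, a, c) of degree 9, and the constant component (coefficient of 1) at N = 2 is divisible by p₂(2, a, c) of degree 10; moreover the ideal generated by the two components at N = 2 equals the ideal (p₁(2,a,c), p₂(2,a,c)). -/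
open MvPolynomial

noncomputable section

/-- The ring `ℚ[a,c][z]`; the class `z` is `Polynomial.X`. -/
abbrev S : Type := Polynomial (MvPolynomial (Fin 2) ℚ)

/-- The ideal `(z² + c)`, so that `S ⧸ Irel` is `ℚ[a,c][z]/(z² + c)`. -/
def Irel : Ideal S := Ideal.span {Polynomial.X ^ 2 + Polynomial.C c}

/-- The product `∏_{k=0}^{3} (4a + (4N − 2k)z) · ∏_{k=0}^{5} (6a + (6N − 2k)z)`,
computed in `ℚ[a,c][z]`. -/
def prodP (N : ℤ) : S :=
  (∏ k ∈ Finset.range 4,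
    (Polynomial.C (4 * a) + Polynomial.C (C ((4 * N - 2 * (k : ℤ) : ℤ) : ℚ)) * Polynomial.X)) *
  (∏ k ∈ Finset.range 6,
    (Polynomial.C (6 * a) + Polynomial.C (C ((6 * N - 2 * (k : ℤ) : ℤ) : ℚ)) * Polynomial.X))

end

/-!
Since `c` does not occur in `prodP 2`, the product is a binary form of degree 10 in `a` and `z`.
Splitting it into its even and odd parts in `z` and substituting `z² = -c` gives the two
components, which turn out to be `36864 · p₂(2)` and `73728 · p₁(2)`; they are well defined
because `{1, z}` is a basis of `ℚ[a,c][z]/(z² + c)`.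
-/

namespace Polynomial

variable {R : Type*} [CommRing R] (r : R)

theorem mk_comp_X_sq_add_X_mul_comp_X_sq (p q : R[X]) :
    Ideal.Quotient.mk (Ideal.span {X ^ 2 + C r}) (p.comp (X ^ 2) + X * q.comp (X ^ 2)) =
      Ideal.Quotient.mk (Ideal.span {X ^ 2 + C r}) (C (p.eval (-r)) + C (q.eval (-r)) * X) := by
  have hdvd (s : R[X]) : X ^ 2 + C r ∣ s.comp (X ^ 2) - C (s.eval (-r)) := by
    have := sub_dvd_eval_sub (X ^ 2 : R[X]) (C (-r)) (s.map C)
    rwa [eval_map, eval_map, eval₂_at_apply, map_neg, sub_neg_eq_add] at this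
  refine Ideal.Quotient.eq.mpr (Ideal.mem_span_singleton.mpr ?_)
  convert dvd_add (hdvd p) (dvd_mul_of_dvd_right (hdvd q) X) using 1
  ring

theorem C_add_C_mul_X_eq_of_mk_eq {a b a' b' : R}
    (h : Ideal.Quotient.mk (Ideal.span {X ^ 2 + C r}) (C a + C b * X) =
      Ideal.Quotient.mk (Ideal.span {X ^ 2 + C r}) (C a' + C b' * X)) :
    a = a' ∧ b = b' := by
  nontriviality R
  have hdvd : X ^ 2 + C r ∣ C (b - b') * X + C (a - a') := by
    convert Ideal.mem_span_singleton.mp (Ideal.Quotient.eq.mp h) using 1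
    simp only [map_sub]
    ring
  have hzero : C (b - b') * X + C (a - a') = 0 := by
    by_contra hne
    refine (monic_X_pow_add_C r two_ne_zero).not_dvd_of_degree_lt hne ?_ hdvd
    rw [degree_X_pow_add_C two_pos]
    exact degree_linear_le.trans_lt (by norm_num)
  have h0 := congrArg (coeff · 0) hzero
  have h1 := congrArg (coeff · 1) hzero
  simp only [coeff_add, coeff_C_mul_X, coeff_C, coeff_zero, zero_ne_one, one_ne_zero, if_true,
    if_false, zero_add, add_zero, sub_eq_zero] at h0 h1
  exact ⟨h0, h1⟩

end Polynomial

theorem Ideal.span_pair_mul_left_unit {R : Type*} [CommSemiring R] {u v : R} (hu : IsUnit u)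
    (hv : IsUnit v) (x y : R) : Ideal.span {u * x, v * y} = Ideal.span {x, y} := by
  rw [Ideal.span_insert, Ideal.span_insert, Ideal.span_singleton_mul_left_unit hu,
    Ideal.span_singleton_mul_left_unit hv]

theorem isUnit_ofNat_of_algebra_rat {A : Type*} [Semiring A] [Algebra ℚ A] (n : ℕ)
    [n.AtLeastTwo] : IsUnit (OfNat.ofNat n : A) := by
  simpa only [map_ofNat] using
    (isUnit_iff_ne_zero.mpr (NeZero.ne (OfNat.ofNat n : ℚ))).map (algebraMap ℚ A)

noncomputable def prodTwoEven : S :=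
  36864 * (Polynomial.C (324 * a ^ 10) + Polynomial.C (20475 * a ^ 8) * Polynomial.X
    + Polynomial.C (120382 * a ^ 6) * Polynomial.X ^ 2
    + Polynomial.C (133495 * a ^ 4) * Polynomial.X ^ 3
    + Polynomial.C (27244 * a ^ 2) * Polynomial.X ^ 4 + Polynomial.C 480 * Polynomial.X ^ 5)

noncomputable def prodTwoOdd : S :=
  73728 * (Polynomial.C (1944 * a ^ 9) + Polynomial.C (31095 * a ^ 7) * Polynomial.X
    + Polynomial.C (77392 * a ^ 5) * Polynomial.X ^ 2
    + Polynomial.C (38005 * a ^ 3) * Polynomial.X ^ 3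
    + Polynomial.C (2764 * a) * Polynomial.X ^ 4)

theorem prodP_two_eq :
    prodP 2 = prodTwoEven.comp (Polynomial.X ^ 2)
      + Polynomial.X * prodTwoOdd.comp (Polynomial.X ^ 2) := by
  simp only [prodP, prodTwoEven, prodTwoOdd, Finset.prod_range_succ, Finset.prod_range_zero,
    Polynomial.add_comp, Polynomial.mul_comp, Polynomial.C_comp, Polynomial.X_comp,
    Polynomial.pow_comp, Polynomial.ofNat_comp]
  norm_num
  simp only [map_ofNat]
  ring

theorem prodTwoEven_eval_neg_c : prodTwoEven.eval (-c) = 36864 * p2 2 := by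
  simp only [prodTwoEven, p2, Polynomial.eval_mul, Polynomial.eval_add, Polynomial.eval_pow,
    Polynomial.eval_C, Polynomial.eval_X, Polynomial.eval_ofNat]
  norm_num
  simp only [map_ofNat]
  ring

theorem prodTwoOdd_eval_neg_c : prodTwoOdd.eval (-c) = 73728 * p1 2 := by
  simp only [prodTwoOdd, p1, Polynomial.eval_mul, Polynomial.eval_add, Polynomial.eval_pow,
    Polynomial.eval_C, Polynomial.eval_X, Polynomial.eval_ofNat]
  norm_num
  simp only [map_ofNat]
  ring

/-- If the image of the product `P₂` in `R = ℚ[a,c][z]/(z² + c)` is written as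
`q₀ + q₁·z` in the basis `{1, z}` over `ℚ[a,c]`, then the `z`-component `q₁` is divisible
by `p₁(2,a,c)`, the constant component `q₀` is divisible by `p₂(2,a,c)`, and the ideal
`(q₀, q₁)` equals the ideal `(p₁(2,a,c), p₂(2,a,c))`. -/
theorem stmt_13 (q₀ q₁ : MvPolynomial (Fin 2) ℚ)
    (h : Ideal.Quotient.mk Irel (prodP 2) =
      Ideal.Quotient.mk Irel (Polynomial.C q₀ + Polynomial.C q₁ * Polynomial.X)) :
    p1 2 ∣ q₁ ∧ p2 2 ∣ q₀ ∧
      Ideal.span {q₀, q₁} = Ideal.span {p1 2, p2 2} := by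
  have hprod : Ideal.Quotient.mk Irel (prodP 2) = Ideal.Quotient.mk Irel
      (Polynomial.C (36864 * p2 2) + Polynomial.C (73728 * p1 2) * Polynomial.X) := by
    rw [prodP_two_eq, Irel, Polynomial.mk_comp_X_sq_add_X_mul_comp_X_sq,
      prodTwoEven_eval_neg_c, prodTwoOdd_eval_neg_c]
  obtain ⟨rfl, rfl⟩ := Polynomial.C_add_C_mul_X_eq_of_mk_eq c (h.symm.trans hprod)
  refine ⟨dvd_mul_left _ _, dvd_mul_left _ _, ?_⟩
  rw [Ideal.span_pair_mul_left_unit (isUnit_ofNat_of_algebra_rat _) (isUnit_ofNat_of_algebra_rat _),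
    Set.pair_comm]
end
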